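/- arXiv:1110.3168 — 2 statements merged into one kernel-verified Lean document; each statement's English description precedes it below -/
import Mathlib

section
/- (Theorem 2.4, second part) For every real p ≥ 1 and every sequence α : ℕ → A, p_p(α) = lim_{m→∞} (f_{α(0)} ∘ f_{α(1)} ∘ ⋯ ∘ f_{α(m-1)})(0) in l^p(A); that is, p_p : N(A) → ω_p^A is the canonical projection from the shift space onto the attractor of the IIFS (l^p(A), (f_a)_{a∈A}). -/
open scoped ENNReal
open Filter Topology

/-- For a sequence `α : ℕ → A`, the function `p_p(α) : A' → ℝ` (where `A' = A \ {z}`)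
given by `p_p(α)(b) = ∑_{k ∈ ℕ, α k = b} 2^{-(k+1)}`. -/
noncomputable def pFun {A : Type*} (z : A) (α : ℕ → A) (b : {b : A // b ≠ z}) : ℝ :=
  ∑' k : {k : ℕ | α k = (b : A)}, (2 : ℝ)⁻¹ ^ ((k : ℕ) + 1)

lemma summable_base : Summable (fun k : ℕ => (2 : ℝ)⁻¹ ^ (k + 1)) := by
  apply Summable.comp_injective (summable_geometric_of_lt_one (by norm_num) (by norm_num))
    (add_left_injective 1)

lemma tsum_base : ∑' k : ℕ, (2 : ℝ)⁻¹ ^ (k + 1) = 1 := by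
  have h : ∀ k : ℕ, (2 : ℝ)⁻¹ ^ (k + 1) = 2⁻¹ * 2⁻¹ ^ k := fun k => by ring
  rw [tsum_congr h, tsum_mul_left, tsum_geometric_of_lt_one (by norm_num) (by norm_num)]
  norm_num

lemma pFun_nonneg {A : Type*} (z : A) (α : ℕ → A) (b : {b : A // b ≠ z}) :
    0 ≤ pFun z α b :=
  tsum_nonneg fun k => by positivity

lemma pFun_eq_indicator {A : Type*} (z : A) (α : ℕ → A) (b : {b : A // b ≠ z}) :
    pFun z α b =
      ∑' k : ℕ, Set.indicator {k : ℕ | α k = (b : A)} (fun k => (2 : ℝ)⁻¹ ^ (k + 1)) k := by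
  unfold pFun
  exact tsum_subtype {k : ℕ | α k = (b : A)} (fun k => (2 : ℝ)⁻¹ ^ (k + 1))

lemma summable_pFun {A : Type*} (z : A) (α : ℕ → A) : Summable (pFun z α) := by
  classical
  apply summable_of_sum_le (c := 1) (pFun_nonneg z α)
  intro s
  have hind : ∀ b : {b : A // b ≠ z},
      Summable (Set.indicator {k : ℕ | α k = (b : A)} (fun k => (2 : ℝ)⁻¹ ^ (k + 1))) :=
    fun b => summable_base.indicator _
  have h1 : ∑ b ∈ s, pFun z α b
      = ∑' k : ℕ, ∑ b ∈ s, Set.indicator {k : ℕ | α k = (b : A)}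
          (fun k => (2 : ℝ)⁻¹ ^ (k + 1)) k := by
    rw [Finset.sum_congr rfl fun b _ => pFun_eq_indicator z α b]
    exact (Summable.tsum_finsetSum fun b _ => hind b).symm
  have hle : ∀ k : ℕ, ∑ b ∈ s, Set.indicator {k : ℕ | α k = (b : A)}
      (fun k => (2 : ℝ)⁻¹ ^ (k + 1)) k ≤ (2 : ℝ)⁻¹ ^ (k + 1) := by
    intro k
    by_cases hz : α k = z
    · have : ∀ b ∈ s, Set.indicator {k : ℕ | α k = (b : A)}
          (fun k => (2 : ℝ)⁻¹ ^ (k + 1)) k = 0 := by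
        intro b _
        apply Set.indicator_of_notMem
        simp only [Set.mem_setOf_eq, hz]
        exact fun h => b.2 h.symm
      rw [Finset.sum_congr rfl this, Finset.sum_const, smul_zero]
      positivity
    · have hb : ∀ b ∈ s, Set.indicator {k : ℕ | α k = (b : A)}
          (fun k => (2 : ℝ)⁻¹ ^ (k + 1)) k
          = if b = (⟨α k, hz⟩ : {b : A // b ≠ z}) then (2 : ℝ)⁻¹ ^ (k + 1) else 0 := by
        intro b _
        rw [Set.indicator_apply]
        congr 1
        simp only [Set.mem_setOf_eq, eq_comm (a := α k)]
        rw [Subtype.ext_iff]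
      rw [Finset.sum_congr rfl hb, Finset.sum_ite_eq' s _ (fun _ => (2 : ℝ)⁻¹ ^ (k + 1))]
      split_ifs
      · exact le_rfl
      · positivity
  have hnn : ∀ k : ℕ, 0 ≤ ∑ b ∈ s, Set.indicator {k : ℕ | α k = (b : A)}
      (fun k => (2 : ℝ)⁻¹ ^ (k + 1)) k := by
    intro k
    apply Finset.sum_nonneg
    intro b _
    exact Set.indicator_nonneg (fun k _ => by positivity) k
  rw [h1, ← tsum_base]
  exact Summable.tsum_le_tsum hle (Summable.of_nonneg_of_le hnn hle summable_base) summable_base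

lemma pFun_memℓp {A : Type*} (z : A) (α : ℕ → A) {P : ℝ≥0∞} (hP : 1 ≤ P) :
    Memℓp (pFun z α) P := by
  apply Memℓp.of_exponent_ge (q := 1) _ hP
  apply memℓp_gen
  simp only [ENNReal.toReal_one, Real.rpow_one]
  apply Summable.congr (summable_pFun z α)
  intro b
  rw [Real.norm_of_nonneg (pFun_nonneg z α b)]

/-- The map `p_p : N(A) → l^p(A)`, sending `α` to the element of `l^p(A)` with
coordinates `p_p(α)(b) = ∑_{k ∈ ℕ, α k = b} 2^{-(k+1)}`. -/
noncomputable def pp {A : Type*} (z : A) (α : ℕ → A) (P : ℝ≥0∞) [Fact (1 ≤ P)] :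
    lp (fun _ : {b : A // b ≠ z} => ℝ) P :=
  ⟨pFun z α, pFun_memℓp z α Fact.out⟩

/-- The element `u_a` of `l^p(A)`: `u_z = 0` and, for `a ≠ z`, `u_a` is the indicator
function of `{a}` on `A' = A \ {z}`. -/
noncomputable def uElem {A : Type*} (z : A) (P : ℝ≥0∞) (a : A) :
    lp (fun _ : {b : A // b ≠ z} => ℝ) P :=
  letI := Classical.decEq A
  letI := Classical.decEq {b : A // b ≠ z}
  if h : a = z then 0 else lp.single P ⟨a, h⟩ 1

/-- The map `f_a : l^p(A) → l^p(A)`, `f_a(x) = (x + u_a)/2`. -/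
noncomputable def fMap {A : Type*} (z : A) (P : ℝ≥0∞) (a : A)
    (x : lp (fun _ : {b : A // b ≠ z} => ℝ) P) : lp (fun _ : {b : A // b ≠ z} => ℝ) P :=
  (2 : ℝ)⁻¹ • (x + uElem z P a)

/-- `iterComp f ω m = f_{ω 0} ∘ f_{ω 1} ∘ ⋯ ∘ f_{ω (m-1)}`. -/
def iterComp {X : Type*} {I : Type*} (f : I → X → X) (ω : ℕ → I) : ℕ → X → X
  | 0 => id
  | m + 1 => iterComp f ω m ∘ f (ω m)

/-! Unwinding the composition gives `(f_{α 0} ∘ ⋯ ∘ f_{α (m-1)})(0) = ∑_{k<m} 2^{-(k+1)} u_{α k}`,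
and `p_p(α)` is the sum of the absolutely convergent series `∑_k 2^{-(k+1)} u_{α k}`: its terms
have norm at most `2^{-(k+1)}`, and evaluating it coordinatewise gives the defining series of
`p_p(α)(b)`. -/

section

variable {A : Type*} (z : A) (P : ℝ≥0∞)

lemma iterComp_fMap_apply (α : ℕ → A) (m : ℕ) (x : lp (fun _ : {b : A // b ≠ z} => ℝ) P) :
    iterComp (fMap z P) α m x =
      (2 : ℝ)⁻¹ ^ m • x + ∑ k ∈ Finset.range m, (2 : ℝ)⁻¹ ^ (k + 1) • uElem z P (α k) := by
  induction m generalizing x with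
  | zero => simp [iterComp]
  | succ m ih =>
    rw [iterComp, Function.comp_apply, ih, fMap, Finset.sum_range_succ, smul_smul, ← pow_succ,
      smul_add]
    abel

lemma iterComp_fMap_zero (α : ℕ → A) (m : ℕ) :
    iterComp (fMap z P) α m 0 =
      ∑ k ∈ Finset.range m, (2 : ℝ)⁻¹ ^ (k + 1) • uElem z P (α k) := by
  simp [iterComp_fMap_apply]

lemma uElem_apply [DecidableEq A] (a : A) (b : {b : A // b ≠ z}) :
    uElem z P a b = if a = b then 1 else 0 := by
  by_cases ha : a = z
  · simp [uElem, ha, b.2.symm]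
  · simp only [uElem, ha, dite_false, lp.single_apply, Pi.single_apply, ← Subtype.coe_inj]
    grind

variable [Fact (1 ≤ P)]

lemma norm_uElem_le_one (a : A) : ‖uElem z P a‖ ≤ 1 := by
  unfold uElem
  split_ifs
  · simp
  · simp [lp.norm_single (zero_lt_one.trans_le Fact.out)]

theorem hasSum_pp (α : ℕ → A) :
    HasSum (fun k => (2 : ℝ)⁻¹ ^ (k + 1) • uElem z P (α k)) (pp z α P) := by
  classical
  have hsum : Summable fun k => (2 : ℝ)⁻¹ ^ (k + 1) • uElem z P (α k) :=
    summable_base.of_norm_bounded fun k => by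
      rw [norm_smul, Real.norm_of_nonneg (by positivity)]
      exact mul_le_of_le_one_right (by positivity) (norm_uElem_le_one z P (α k))
  refine hsum.hasSum_iff.mpr (lp.ext (funext fun b => ?_))
  have hcoord : HasSum (Set.indicator {k | α k = (b : A)} fun k => (2 : ℝ)⁻¹ ^ (k + 1))
      (pFun z α b) := by
    rw [pFun_eq_indicator]
    exact (summable_base.indicator _).hasSum
  have hterm : (fun k => lp.evalCLM ℝ _ P b ((2 : ℝ)⁻¹ ^ (k + 1) • uElem z P (α k))) =
      Set.indicator {k | α k = (b : A)} fun k => (2 : ℝ)⁻¹ ^ (k + 1) := by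
    ext k
    simp [lp.evalCLM, uElem_apply, Set.indicator_apply]
  rw [← hterm] at hcoord
  exact (hsum.hasSum.mapL _).unique hcoord

end

theorem pp_is_canonical_projection_general {A : Type*} (z : A) (P : ℝ≥0∞)
    [Fact (1 ≤ P)] (α : ℕ → A) :
    Tendsto (fun m : ℕ => iterComp (fMap z P) α m 0) atTop (𝓝 (pp z α P)) := by
  simpa only [iterComp_fMap_zero] using (hasSum_pp z P α).tendsto_sum_nat

/-- Theorem 2.4, second part. For every `p ∈ [1, ∞)` and every
`α : ℕ → A`, `p_p(α) = lim_m (f_{α 0} ∘ ⋯ ∘ f_{α (m-1)}) 0` in `l^p(A)`; i.e. `p_p` is the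
canonical projection from the shift space onto the attractor of the IIFS. -/
theorem pp_is_canonical_projection {A : Type*} [Infinite A] (z : A) (P : ℝ≥0∞)
    [Fact (1 ≤ P)] (hP : P ≠ ∞) (α : ℕ → A) :
    Tendsto (fun m : ℕ => iterComp (fMap z P) α m 0) atTop (𝓝 (pp z α P)) :=
  pp_is_canonical_projection_general z P α
end

section
/- (Remark 3.1) The topological structure of ω_p^A is independent of p: for all real p, q ≥ 1 and all sequences (α^n)_{n≥1} and α in N(A), lim_{n→∞} ‖p_p(α^n) − p_p(α)‖_p = 0 if and only if lim_{n→∞} ‖p_q(α^n) − p_q(α)‖_q = 0; equivalently, the identity map from ω_p^A with the metric induced from l^p(A) to ω_q^A with the metric induced from l^q(A) (these two sets consisting of the same functions A' → ℝ) is a homeomorphism. -/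
open scoped ENNReal
open Filter Topology

/-!
Every `p(α)` is nonnegative with `ℓ¹`-mass at most `1`, and dropping the first `m` terms of `α`
leaves `2⁻ᵐ` times another such function. So off the at most `2m` coordinates `α k`, `β k`
(`k < m`) the difference `p(β) - p(α)` has `ℓ¹`-mass at most `2 ⬝ 2⁻ᵐ`, while on them it is
bounded by its sup norm, hence by its `ℓᵖ` norm: `ℓᵖ`-convergence forces `ℓ¹`-convergence.
Conversely `‖·‖_p ≤ ‖·‖₁`.
-/

namespace lp

variable {ι : Type*} {E : ι → Type*} [∀ i, NormedAddCommGroup (E i)]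

theorem norm_le_of_exponent_le {p q : ℝ≥0∞} (hp : 0 < p.toReal) (hpq : p ≤ q)
    (f : lp E p) (g : lp E q) (hfg : ⇑g = ⇑f) : ‖g‖ ≤ ‖f‖ := by
  have hf_apply : ∀ i, ‖f i‖ ≤ ‖f‖ := norm_apply_le_norm (ENNReal.toReal_pos_iff.1 hp).1.ne' f
  rcases eq_or_ne q ∞ with rfl | hq
  · exact norm_le_of_forall_le (norm_nonneg' f) fun i => hfg ▸ hf_apply i
  have hpq' : p.toReal ≤ q.toReal := ENNReal.toReal_mono hq hpq
  have hq' : 0 < q.toReal := hp.trans_le hpq'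
  have hsplit : ∀ x : ℝ, 0 ≤ x → x ^ q.toReal = x ^ p.toReal * x ^ (q.toReal - p.toReal) :=
    fun x hx => by rw [← Real.rpow_add' hx (by linarith), add_sub_cancel]
  refine norm_le_of_tsum_le hq' (norm_nonneg' f) ?_
  calc ∑' i, ‖g i‖ ^ q.toReal
      ≤ ∑' i, ‖f i‖ ^ p.toReal * ‖f‖ ^ (q.toReal - p.toReal) := by
        refine Summable.tsum_le_tsum (fun i => ?_) ((lp.memℓp g).summable hq')
          (((lp.memℓp f).summable hp).mul_right _)
        rw [hfg, hsplit _ (norm_nonneg _)]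
        gcongr
        exact hf_apply i
    _ = ‖f‖ ^ q.toReal := by
        rw [tsum_mul_right, ← norm_rpow_eq_tsum hp, ← hsplit _ (norm_nonneg' f)]

theorem norm_eq_tsum_norm (f : lp E 1) : ‖f‖ = ∑' i, ‖f i‖ := by
  simpa using norm_eq_tsum_rpow (by simp) f

end lp

theorem Filter.Tendsto.of_forall_le_mul_add {ι : Type*} {l : Filter ι} {s d : ι → ℝ}
    {K c : ℕ → ℝ} (hc : Tendsto c atTop (𝓝 0)) (hd : Tendsto d l (𝓝 0)) (hs : ∀ i, 0 ≤ s i)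
    (hle : ∀ m i, s i ≤ K m * d i + c m) : Tendsto s l (𝓝 0) := by
  refine tendsto_order.2 ⟨fun a ha => Eventually.of_forall fun i => ha.trans_le (hs i),
    fun ε hε => ?_⟩
  obtain ⟨m, hm⟩ := (hc.eventually (gt_mem_nhds hε)).exists
  have hlim : Tendsto (fun i => K m * d i + c m) l (𝓝 (c m)) := by
    simpa using (hd.const_mul (K m)).add_const (c m)
  exact (hlim.eventually (gt_mem_nhds hm)).mono fun i hi => (hle m i).trans_lt hi

section pFun

variable {A : Type*} (z : A)

lemma sum_fiber_indicator_le (α : ℕ → A) (s : Finset {b : A // b ≠ z}) (k : ℕ) :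
    ∑ b ∈ s, Set.indicator {k : ℕ | α k = (b : A)} (fun k => (2 : ℝ)⁻¹ ^ (k + 1)) k ≤
      (2 : ℝ)⁻¹ ^ (k + 1) := by
  classical
  calc ∑ b ∈ s, Set.indicator {k : ℕ | α k = (b : A)} (fun k => (2 : ℝ)⁻¹ ^ (k + 1)) k
      = ∑ a ∈ s.map (Function.Embedding.subtype _),
          if a = α k then (2 : ℝ)⁻¹ ^ (k + 1) else 0 := by
        rw [Finset.sum_map]
        exact Finset.sum_congr rfl fun b _ => by
          simp only [Set.indicator_apply, Set.mem_ofPred_eq, Function.Embedding.subtype_apply,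
            eq_comm (a := α k)]
          congr
    _ = if α k ∈ s.map (Function.Embedding.subtype _) then (2 : ℝ)⁻¹ ^ (k + 1) else 0 :=
        Finset.sum_ite_eq' _ _ _
    _ ≤ (2 : ℝ)⁻¹ ^ (k + 1) := by
        split_ifs
        · exact le_rfl
        · positivity

lemma tsum_pFun_le_one (α : ℕ → A) : ∑' b, pFun z α b ≤ 1 := by
  refine (summable_pFun z α).tsum_le_of_sum_le fun s => ?_
  have hsummable : ∀ b ∈ s,
      Summable (Set.indicator {k : ℕ | α k = (b : A)} (fun k => (2 : ℝ)⁻¹ ^ (k + 1))) :=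
    fun b _ => summable_base.indicator _
  rw [Finset.sum_congr rfl fun b _ => pFun_eq_indicator z α b,
    ← Summable.tsum_finsetSum hsummable, ← tsum_base]
  exact Summable.tsum_le_tsum (sum_fiber_indicator_le z α s) (summable_sum hsummable) summable_base

lemma pFun_eq_sum_range_add (α : ℕ → A) (m : ℕ) (b : {b : A // b ≠ z}) :
    pFun z α b = ∑ k ∈ Finset.range m,
        Set.indicator {k : ℕ | α k = (b : A)} (fun k => (2 : ℝ)⁻¹ ^ (k + 1)) k +
      (2 : ℝ)⁻¹ ^ m * pFun z (fun k => α (k + m)) b := by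
  rw [pFun_eq_indicator, pFun_eq_indicator, ← tsum_mul_left,
    ← (summable_base.indicator _).sum_add_tsum_nat_add m]
  congr 1
  refine tsum_congr fun k => ?_
  by_cases h : α (k + m) = b
  · rw [Set.indicator_of_mem (s := {k : ℕ | α k = (b : A)}) h,
      Set.indicator_of_mem (s := {k : ℕ | α (k + m) = (b : A)}) h]
    ring
  · rw [Set.indicator_of_notMem (s := {k : ℕ | α k = (b : A)}) h,
      Set.indicator_of_notMem (s := {k : ℕ | α (k + m) = (b : A)}) h, mul_zero]

lemma pFun_eq_of_forall_lt_ne {α : ℕ → A} {m : ℕ} {b : {b : A // b ≠ z}}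
    (hb : ∀ k < m, α k ≠ b) : pFun z α b = (2 : ℝ)⁻¹ ^ m * pFun z (fun k => α (k + m)) b := by
  rw [pFun_eq_sum_range_add z α m b, Finset.sum_eq_zero, zero_add]
  exact fun k hk => Set.indicator_of_notMem (s := {k : ℕ | α k = (b : A)})
    (hb k (Finset.mem_range.1 hk)) _

lemma abs_pFun_sub_le_of_forall_lt_ne {α β : ℕ → A} {m : ℕ} {b : {b : A // b ≠ z}}
    (hα : ∀ k < m, α k ≠ b) (hβ : ∀ k < m, β k ≠ b) :
    |pFun z β b - pFun z α b| ≤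
      (2 : ℝ)⁻¹ ^ m * (pFun z (fun k => β (k + m)) b + pFun z (fun k => α (k + m)) b) := by
  rw [pFun_eq_of_forall_lt_ne z hβ, pFun_eq_of_forall_lt_ne z hα, ← mul_sub, abs_mul,
    abs_of_nonneg (by positivity)]
  refine mul_le_mul_of_nonneg_left (abs_sub_le_iff.2 ⟨?_, ?_⟩) (by positivity)
  · linarith [pFun_nonneg z (fun k => α (k + m)) b]
  · linarith [pFun_nonneg z (fun k => β (k + m)) b]

lemma norm_pp_one_sub_le (P : ℝ≥0∞) [Fact (1 ≤ P)] (α β : ℕ → A) (m : ℕ) :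
    ‖pp z β 1 - pp z α 1‖ ≤ 2 * m * ‖pp z β P - pp z α P‖ + 2 * (2 : ℝ)⁻¹ ^ m := by
  classical
  set ε := ‖pp z β P - pp z α P‖
  set S : Finset {b : A // b ≠ z} :=
    ((Finset.range m).image α ∪ (Finset.range m).image β).subtype (· ≠ z)
  set tail : {b : A // b ≠ z} → ℝ := fun b =>
    (2 : ℝ)⁻¹ ^ m * (pFun z (fun k => β (k + m)) b + pFun z (fun k => α (k + m)) b)
  have hcard : S.card ≤ 2 * m := calc
    S.card ≤ ((Finset.range m).image α ∪ (Finset.range m).image β).card := by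
      rw [Finset.card_subtype]; exact Finset.card_filter_le _ _
    _ ≤ m + m := (Finset.card_union_le _ _).trans (add_le_add
      (Finset.card_image_le.trans (Finset.card_range m).le)
      (Finset.card_image_le.trans (Finset.card_range m).le))
    _ = 2 * m := by ring
  have hpoint : ∀ b, |pFun z β b - pFun z α b| ≤
      (S : Set _).indicator (fun _ => ε) b + tail b := by
    intro b
    by_cases hb : b ∈ S
    · have htail : 0 ≤ tail b :=
        mul_nonneg (by positivity) (add_nonneg (pFun_nonneg z _ b) (pFun_nonneg z _ b))
      rw [Set.indicator_of_mem hb]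
      exact (lp.norm_apply_le_norm (zero_lt_one.trans_le Fact.out).ne'
        (pp z β P - pp z α P) b).trans (le_add_of_nonneg_right htail)
    · rw [Set.indicator_of_notMem hb, zero_add]
      exact abs_pFun_sub_le_of_forall_lt_ne z
        (fun k hk h => hb (Finset.mem_subtype.2
          (Finset.mem_union_left _ (Finset.mem_image.2 ⟨k, Finset.mem_range.2 hk, h⟩))))
        (fun k hk h => hb (Finset.mem_subtype.2
          (Finset.mem_union_right _ (Finset.mem_image.2 ⟨k, Finset.mem_range.2 hk, h⟩))))
  have hsummable_indicator : Summable ((S : Set _).indicator fun _ => ε) :=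
    summable_of_ne_finset_zero (s := S) fun b hb => Set.indicator_of_notMem hb _
  have hsummable_tail : Summable tail :=
    ((summable_pFun z _).add (summable_pFun z _)).mul_left _
  have hsummable_bound := hsummable_indicator.add hsummable_tail
  rw [lp.norm_eq_tsum_norm]
  calc ∑' b, ‖(pp z β 1 - pp z α 1) b‖
      ≤ ∑' b, ((S : Set _).indicator (fun _ => ε) b + tail b) :=
        Summable.tsum_le_tsum hpoint
          (hsummable_bound.of_nonneg_of_le (fun b => norm_nonneg _) hpoint) hsummable_bound
    _ = S.card * ε + (2 : ℝ)⁻¹ ^ m *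
          (∑' b, pFun z (fun k => β (k + m)) b + ∑' b, pFun z (fun k => α (k + m)) b) := by
        rw [hsummable_indicator.tsum_add hsummable_tail, ← sum_eq_tsum_indicator, tsum_mul_left,
          Summable.tsum_add (summable_pFun z _) (summable_pFun z _)]
        simp
    _ ≤ 2 * m * ε + (2 : ℝ)⁻¹ ^ m * (1 + 1) := by
        gcongr
        · exact_mod_cast hcard
        · exact tsum_pFun_le_one z _
        · exact tsum_pFun_le_one z _
    _ = 2 * m * ε + 2 * (2 : ℝ)⁻¹ ^ m := by ring

lemma norm_pp_sub_le_norm_pp_one_sub (P : ℝ≥0∞) [Fact (1 ≤ P)] (α β : ℕ → A) :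
    ‖pp z β P - pp z α P‖ ≤ ‖pp z β 1 - pp z α 1‖ :=
  lp.norm_le_of_exponent_le (by simp) Fact.out _ _ rfl

lemma tendsto_norm_pp_sub_iff_one {ι : Type*} {l : Filter ι} (P : ℝ≥0∞) [Fact (1 ≤ P)]
    (α : ℕ → A) (αs : ι → ℕ → A) :
    Tendsto (fun n => ‖pp z (αs n) P - pp z α P‖) l (𝓝 0) ↔
      Tendsto (fun n => ‖pp z (αs n) 1 - pp z α 1‖) l (𝓝 0) := by
  refine ⟨fun h => ?_, fun h => squeeze_zero (fun n => norm_nonneg _)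
    (fun n => norm_pp_sub_le_norm_pp_one_sub z P α (αs n)) h⟩
  have hgeom : Tendsto (fun m : ℕ => 2 * (2 : ℝ)⁻¹ ^ m) atTop (𝓝 0) := by
    simpa using (tendsto_pow_atTop_nhds_zero_of_lt_one (r := (2 : ℝ)⁻¹) (by norm_num)
      (by norm_num)).const_mul 2
  exact hgeom.of_forall_le_mul_add h (fun n => norm_nonneg _)
    fun m n => norm_pp_one_sub_le z P α (αs n) m

end pFun

theorem omega_topology_independent_of_p_general {A : Type*} (z : A) (P Q : ℝ≥0∞)
    [Fact (1 ≤ P)] [Fact (1 ≤ Q)]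
    (α : ℕ → A) (αs : ℕ → ℕ → A) :
    Tendsto (fun n : ℕ => ‖pp z (αs n) P - pp z α P‖) atTop (𝓝 0) ↔
      Tendsto (fun n : ℕ => ‖pp z (αs n) Q - pp z α Q‖) atTop (𝓝 0) :=
  (tendsto_norm_pp_sub_iff_one z P α αs).trans (tendsto_norm_pp_sub_iff_one z Q α αs).symm

/-- Remark 3.1. The topological structure of `ω_p^A` is independent of
`p`: for all `p, q ∈ [1, ∞)` and all sequences `(αⁿ)` and `α` in `N(A)`,
`‖p_p(αⁿ) - p_p(α)‖_p → 0` iff `‖p_q(αⁿ) - p_q(α)‖_q → 0`. -/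
theorem omega_topology_independent_of_p {A : Type*} [Infinite A] (z : A) (P Q : ℝ≥0∞)
    [Fact (1 ≤ P)] [Fact (1 ≤ Q)] (hP : P ≠ ∞) (hQ : Q ≠ ∞)
    (α : ℕ → A) (αs : ℕ → ℕ → A) :
    Tendsto (fun n : ℕ => ‖pp z (αs n) P - pp z α P‖) atTop (𝓝 0) ↔
      Tendsto (fun n : ℕ => ‖pp z (αs n) Q - pp z α Q‖) atTop (𝓝 0) :=
  omega_topology_independent_of_p_general z P Q α αs
end
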